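/- Let R be a commutative ring and W ∈ R a non-zero-divisor. Let (E₀, E₁, δ₀, δ₁) be a matrix factorization of W with E₀ and E₁ projective R-modules (not necessarily finitely generated). Set F = coker(δ₁ : E₁ → E₀) and F' = coker(δ₀ : E₀ → E₁); both are R/(W)-modules since W·E₀ = δ₁δ₀(E₀) ⊆ im(δ₁) and W·E₁ = δ₀δ₁(E₁) ⊆ im(δ₀). Then the map F → E₁/WE₁ induced by δ₀ is well defined, and the sequence of R/(W)-modules 0 → F → E₁/WE₁ → F' → 0, whose second map is the natural projection, is exact. -/

import Mathlib

lemma smul_inj_of_proj {R M : Type*} [CommRing R] [AddCommGroup M] [Module R M]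
    (hP : Module.Projective R M) {W : R} (hW : W ∈ nonZeroDivisors R)
    {x : M} (hx : W • x = 0) : x = 0 := by
  obtain ⟨s, hs⟩ := hP.out
  have h1 : s (W • x) = 0 := by rw [hx, map_zero]
  rw [map_smul] at h1
  have h2 : s x = 0 := by
    ext i
    have := congrFun (congrArg (↑· : (M →₀ R) → M → R) h1) i
    simp only [Finsupp.coe_smul, Pi.smul_apply, smul_eq_mul, Finsupp.coe_zero,
      Pi.zero_apply] at this ⊢
    exact (mul_right_mem_nonZeroDivisors_eq_zero_iff hW).mp ((mul_comm _ _).trans this)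
  have := hs x
  rw [h2, map_zero] at this
  exact this.symm

/-- Let `W ∈ R` be a non-zero-divisor and `(E₀, E₁, δ₀, δ₁)` a matrix factorization of `W`
with `E₀`, `E₁` projective. Set `F = coker δ₁` and `F' = coker δ₀`. Then the map
`ι : F → E₁/WE₁` induced by `δ₀` is well defined (it exists, and it is unique since the
projection `E₀ → F` is surjective), and for any `ι` and any map `π : E₁/WE₁ → F'`
induced by the identity, the sequence `0 → F → E₁/WE₁ → F' → 0` is exact:
`ι` is injective, `ker π = range ι`, and `π` is surjective. -/
theorem stmt_4 {R : Type*} [CommRing R] (W : R) (hW : W ∈ nonZeroDivisors R)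
    {E₀ E₁ : Type*} [AddCommGroup E₀] [Module R E₀] [AddCommGroup E₁] [Module R E₁]
    (hP₀ : Module.Projective R E₀) (hP₁ : Module.Projective R E₁)
    (δ₁ : E₁ →ₗ[R] E₀) (δ₀ : E₀ →ₗ[R] E₁)
    (h01 : δ₀ ∘ₗ δ₁ = W • (LinearMap.id : E₁ →ₗ[R] E₁))
    (h10 : δ₁ ∘ₗ δ₀ = W • (LinearMap.id : E₀ →ₗ[R] E₀)) :
    (∃ ι : (E₀ ⧸ LinearMap.range δ₁)
        →ₗ[R] (E₁ ⧸ LinearMap.range (W • (LinearMap.id : E₁ →ₗ[R] E₁))),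
      ι ∘ₗ (LinearMap.range δ₁).mkQ
        = (LinearMap.range (W • (LinearMap.id : E₁ →ₗ[R] E₁))).mkQ ∘ₗ δ₀) ∧
    (∀ (ι : (E₀ ⧸ LinearMap.range δ₁)
        →ₗ[R] (E₁ ⧸ LinearMap.range (W • (LinearMap.id : E₁ →ₗ[R] E₁))))
      (π : (E₁ ⧸ LinearMap.range (W • (LinearMap.id : E₁ →ₗ[R] E₁)))
        →ₗ[R] (E₁ ⧸ LinearMap.range δ₀)),
      ι ∘ₗ (LinearMap.range δ₁).mkQ
        = (LinearMap.range (W • (LinearMap.id : E₁ →ₗ[R] E₁))).mkQ ∘ₗ δ₀ →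
      π ∘ₗ (LinearMap.range (W • (LinearMap.id : E₁ →ₗ[R] E₁))).mkQ
        = (LinearMap.range δ₀).mkQ →
      Function.Injective ι ∧ LinearMap.ker π = LinearMap.range ι ∧
        Function.Surjective π) := by
  have h01' : ∀ y : E₁, δ₀ (δ₁ y) = W • y := fun y =>
    congrFun (congrArg (↑· : (E₁ →ₗ[R] E₁) → E₁ → E₁) h01) y
  have h10' : ∀ x : E₀, δ₁ (δ₀ x) = W • x := fun x =>
    congrFun (congrArg (↑· : (E₀ →ₗ[R] E₀) → E₀ → E₀) h10) x
  set N := LinearMap.range (W • (LinearMap.id : E₁ →ₗ[R] E₁)) with hN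
  constructor
  · refine ⟨Submodule.liftQ _ (N.mkQ ∘ₗ δ₀) ?_, Submodule.liftQ_mkQ _ _ _⟩
    rintro x ⟨y, rfl⟩
    simp only [LinearMap.mem_ker, LinearMap.comp_apply, h01' y]
    rw [Submodule.mkQ_apply, Submodule.Quotient.mk_eq_zero]
    exact ⟨y, rfl⟩
  · intro ι π hι hπ
    have hιa : ∀ x : E₀, ι (Submodule.Quotient.mk x) = N.mkQ (δ₀ x) := fun x =>
      congrFun (congrArg (↑· : (E₀ →ₗ[R] _) → E₀ → _) hι) x
    have hπa : ∀ y : E₁, π (N.mkQ y) = Submodule.Quotient.mk y := fun y =>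
      congrFun (congrArg (↑· : (E₁ →ₗ[R] _) → E₁ → _) hπ) y
    refine ⟨?_, ?_, ?_⟩
    · rw [← LinearMap.ker_eq_bot]
      rw [Submodule.eq_bot_iff]
      rintro q hq
      obtain ⟨x, rfl⟩ := Submodule.mkQ_surjective _ q
      rw [LinearMap.mem_ker] at hq
      rw [Submodule.mkQ_apply, hιa x, Submodule.mkQ_apply,
        Submodule.Quotient.mk_eq_zero] at hq
      obtain ⟨y, hy⟩ := hq
      simp only [LinearMap.smul_apply, LinearMap.id_apply] at hy
      have hz : δ₀ (x - δ₁ y) = 0 := by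
        rw [map_sub, h01' y, hy, sub_self]
      have hz2 : W • (x - δ₁ y) = 0 := by
        rw [← h10' (x - δ₁ y), hz, map_zero]
      have := smul_inj_of_proj hP₀ hW hz2
      have hx : x = δ₁ y := by
        have := sub_eq_zero.mp this
        exact this
      rw [Submodule.mkQ_apply, Submodule.Quotient.mk_eq_zero]
      exact ⟨y, hx.symm⟩
    · ext q
      constructor
      · intro hq
        obtain ⟨y, rfl⟩ := Submodule.mkQ_surjective _ q
        rw [LinearMap.mem_ker, hπa y, Submodule.Quotient.mk_eq_zero] at hq
        obtain ⟨x, rfl⟩ := hq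
        exact ⟨Submodule.Quotient.mk x, hιa x⟩
      · rintro ⟨p, rfl⟩
        obtain ⟨x, rfl⟩ := Submodule.mkQ_surjective _ p
        rw [LinearMap.mem_ker, Submodule.mkQ_apply, hιa x, hπa (δ₀ x),
          Submodule.Quotient.mk_eq_zero]
        exact ⟨x, rfl⟩
    · intro q
      obtain ⟨y, rfl⟩ := Submodule.mkQ_surjective _ q
      exact ⟨N.mkQ y, hπa y⟩
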